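/- For a Banach lattice E, if every order interval of E is |σ|(E,E′)-totally bounded, then every disjointly weakly compact subset of E is |σ|(E,E′)-totally bounded. -/

import Mathlib

/-!
Fix `f ∈ E'` and `ε > 0`. If no `u ≥ 0` made `|f|((|x| - u)⁺) < ε` on all of `A`, one could pick
`aₙ ∈ A` with `|f|((|aₙ| - 4ⁿ ∑_{i<n} |aᵢ|)⁺) ≥ ε`; cutting off also `2⁻ⁿ ∑ 2⁻ⁱ |aᵢ|` turns these
into a disjoint sequence in the solid hull of `A` on which `|f|` stays bounded away from `0`,
against disjoint weak compactness. With such a `u` (common to finitely many `f`), the Riesz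
decomposition writes each `x ∈ A` as an element of `[-u, u]` plus a remainder dominated by
`(|x| - u)⁺`, so finite nets of the order interval `[-u, u]` yield finite nets of `A`.
-/

open Filter Topology ZeroAtInfty Set Bornology

noncomputable section

section Defs

variable {E F X : Type*}

/-- Two elements of a lattice group are (lattice) disjoint. -/
def LatDisjoint [Lattice E] [AddCommGroup E] (x y : E) : Prop := |x| ⊓ |y| = 0

/-- A pairwise disjoint sequence. -/
def DisjointSeq [Lattice E] [AddCommGroup E] (x : ℕ → E) : Prop :=
  ∀ m n, m ≠ n → LatDisjoint (x m) (x n)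

variable [NormedAddCommGroup X] [NormedSpace ℝ X]

/-- A weakly null sequence in a normed space. -/
def WeaklyNull (x : ℕ → X) : Prop :=
  ∀ f : X →L[ℝ] ℝ, Tendsto (fun n => f (x n)) atTop (𝓝 0)

/-- A weakly Cauchy sequence. -/
def WeaklyCauchy (x : ℕ → X) : Prop :=
  ∀ f : X →L[ℝ] ℝ, ∃ l : ℝ, Tendsto (fun n => f (x n)) atTop (𝓝 l)

/-- A weakly precompact set: every sequence has a weakly Cauchy subsequence. -/
def WeaklyPrecompactSet (A : Set X) : Prop :=
  ∀ x : ℕ → X, (∀ n, x n ∈ A) → ∃ φ : ℕ → ℕ, StrictMono φ ∧ WeaklyCauchy (x ∘ φ)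

/-- A relatively weakly compact set: closure in the weak topology is compact. -/
def RelWeaklyCompact (A : Set X) : Prop :=
  IsCompact (closure ((toWeakSpace ℝ X) '' A))

/-- A weakly sequentially complete space. -/
def WeaklySeqComplete (X : Type*) [NormedAddCommGroup X] [NormedSpace ℝ X] : Prop :=
  ∀ x : ℕ → X, WeaklyCauchy x → ∃ l : X, ∀ f : X →L[ℝ] ℝ,
    Tendsto (fun n => f (x n)) atTop (𝓝 (f l))

/-- A weak*-null sequence of functionals. -/
def WeakStarNull (f : ℕ → X →L[ℝ] ℝ) : Prop :=
  ∀ x : X, Tendsto (fun n => f n x) atTop (𝓝 0)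

/-- A sequence of functionals converges uniformly to zero on a set `A`. -/
def UnifZeroOn (f : ℕ → X →L[ℝ] ℝ) (A : Set X) : Prop :=
  ∀ ε > (0:ℝ), ∃ N : ℕ, ∀ n ≥ N, ∀ x ∈ A, |f n x| < ε

/-- A limited set. -/
def LimitedSet (A : Set X) : Prop :=
  IsBounded A ∧ ∀ f : ℕ → X →L[ℝ] ℝ, WeakStarNull f → UnifZeroOn f A

variable [NormedAddCommGroup E] [Lattice E] [HasSolidNorm E] [IsOrderedAddMonoid E] [NormedSpace ℝ E]
  [NormedAddCommGroup F] [Lattice F] [HasSolidNorm F] [IsOrderedAddMonoid F] [NormedSpace ℝ F]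

/-- An almost Dunford–Pettis operator: sends disjoint weakly null sequences to norm null ones. -/
def AlmostDP (T : E →L[ℝ] X) : Prop :=
  ∀ x : ℕ → E, DisjointSeq x → WeaklyNull x → Tendsto (fun n => ‖T (x n)‖) atTop (𝓝 0)

/-- A Dunford–Pettis operator: sends weakly null sequences to norm null ones. -/
def DunfordPettisOp (T : E →L[ℝ] X) : Prop :=
  ∀ x : ℕ → E, WeaklyNull x → Tendsto (fun n => ‖T (x n)‖) atTop (𝓝 0)

/-- An almost L-set in the dual: disjoint weakly null sequences of `E` converge to zero
uniformly on `B`. -/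
def AlmostLSet (B : Set (E →L[ℝ] ℝ)) : Prop :=
  IsBounded B ∧ ∀ x : ℕ → E, DisjointSeq x → WeaklyNull x →
    ∀ ε > (0:ℝ), ∃ N : ℕ, ∀ n ≥ N, ∀ f ∈ B, |f (x n)| < ε

/-- An almost L-sequence in the dual. -/
def AlmostLSeq (f : ℕ → E →L[ℝ] ℝ) : Prop := AlmostLSet (Set.range f)

/-- A super weakly precompact set: a bounded set mapped to a relatively compact subset of `c₀`
by every almost Dunford–Pettis operator. -/
def SuperWeaklyPrecompact (A : Set E) : Prop :=
  IsBounded A ∧ ∀ T : E →L[ℝ] C₀(ℕ, ℝ), AlmostDP T → IsCompact (closure (T '' A))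

/-- The solid hull of a set in a Banach lattice. -/
def SolidHull (A : Set E) : Set E := {y | ∃ x ∈ A, |y| ≤ |x|}

/-- An L-weakly compact set. -/
def LWeaklyCompact (A : Set E) : Prop :=
  IsBounded A ∧ ∀ x : ℕ → E, (∀ n, x n ∈ SolidHull A) → DisjointSeq x →
    Tendsto (fun n => ‖x n‖) atTop (𝓝 0)

/-- A disjointly weakly compact set. -/
def DisjointlyWeaklyCompact (A : Set E) : Prop :=
  IsBounded A ∧ ∀ x : ℕ → E, (∀ n, x n ∈ SolidHull A) → DisjointSeq x → WeaklyNull x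

/-- The positive Schur property. -/
def PositiveSchur (E : Type*) [NormedAddCommGroup E] [Lattice E] [HasSolidNorm E] [IsOrderedAddMonoid E] [NormedSpace ℝ E] : Prop :=
  ∀ x : ℕ → E, DisjointSeq x → WeaklyNull x → Tendsto (fun n => ‖x n‖) atTop (𝓝 0)

/-- `|f|(|x|)`, via the Riesz–Kantorovich formula `|f|(|x|) = sup {f y : |y| ≤ |x|}`. -/
def pabs (f : E →L[ℝ] ℝ) (x : E) : ℝ := sSup ((fun y => f y) '' {y : E | |y| ≤ |x|})

/-- Totally bounded for the absolute weak topology `|σ|(E,E')` generated by the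
seminorms `x ↦ |f|(|x|)`. -/
def AWTotallyBounded (A : Set E) : Prop :=
  ∀ ε > (0:ℝ), ∀ s : Finset (E →L[ℝ] ℝ), ∃ Φ : Finset E, ↑Φ ⊆ A ∧
    ∀ x ∈ A, ∃ y ∈ Φ, ∀ f ∈ s, pabs f (x - y) < ε

/-- Pointwise order on the dual: `f ≤ g` iff `f x ≤ g x` for all `x ≥ 0`. -/
def dualLe (f g : E →L[ℝ] ℝ) : Prop := ∀ x : E, 0 ≤ x → f x ≤ g x

/-- Order bounded operator: maps order intervals into order intervals. -/
def OrderBoundedOp (T : E →L[ℝ] F) : Prop :=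
  ∀ a b : E, ∃ c d : F, T '' Set.Icc a b ⊆ Set.Icc c d

/-- PL-compact operator: the image of the closed unit ball is `|σ|(F,F')`-totally bounded. -/
def PLCompact (T : E →L[ℝ] F) : Prop :=
  AWTotallyBounded (T '' Metric.closedBall 0 1)

/-- AMAL-compact operator: the image of every order interval is `|σ|(F,F')`-totally bounded. -/
def AMALCompact (T : E →L[ℝ] F) : Prop :=
  ∀ x : E, 0 ≤ x → AWTotallyBounded (T '' Set.Icc (-x) x)

/-- The dual norm is order continuous: `‖f_α‖ → 0` for every decreasing net `f_α ↓ 0`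
of positive functionals. -/
def DualOrderContinuousNorm (E : Type*) [NormedAddCommGroup E] [Lattice E] [HasSolidNorm E] [IsOrderedAddMonoid E] [NormedSpace ℝ E] : Prop :=
  ∀ (ι : Type) (_ : Preorder ι) (_ : Nonempty ι),
    (∀ i j : ι, ∃ k, i ≤ k ∧ j ≤ k) → ∀ f : ι → E →L[ℝ] ℝ,
    (∀ i j, i ≤ j → dualLe (f j) (f i)) →
    (∀ i, dualLe 0 (f i)) →
    (∀ g, (∀ i, dualLe g (f i)) → dualLe g 0) →
    Tendsto (fun i => ‖f i‖) atTop (𝓝 0)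

/-- An atom of the dual lattice: a positive nonzero functional such that any two disjoint
positive functionals below it cannot both be nonzero. -/
def DualAtom (a : E →L[ℝ] ℝ) : Prop :=
  dualLe 0 a ∧ a ≠ 0 ∧
  ∀ b c : E →L[ℝ] ℝ, dualLe 0 b → dualLe b a → dualLe 0 c → dualLe c a →
    (∀ x : E, 0 ≤ x → ∀ ε > (0:ℝ), ∃ y : E, 0 ≤ y ∧ y ≤ x ∧ b y + c (x - y) < ε) →
    b = 0 ∨ c = 0

/-- `|f|` is disjoint from the positive functional `a`, i.e. `(|f| ⊓ a)(x) = 0` for `x ≥ 0`. -/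
def dualAbsDisjoint (f a : E →L[ℝ] ℝ) : Prop :=
  ∀ x : E, 0 ≤ x → ∀ ε > (0:ℝ), ∃ y : E, 0 ≤ y ∧ y ≤ x ∧ pabs f y + a (x - y) < ε

/-- The dual Banach lattice is discrete: the band generated by its atoms is everything,
i.e. the disjoint complement of the set of atoms is trivial. -/
def DualDiscrete (E : Type*) [NormedAddCommGroup E] [Lattice E] [HasSolidNorm E] [IsOrderedAddMonoid E] [NormedSpace ℝ E] : Prop :=
  ∀ f : E →L[ℝ] ℝ, (∀ a : E →L[ℝ] ℝ, DualAtom a → dualAbsDisjoint f a) → f = 0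

/-- The absolute weak* topology `|σ|(E',E)` on the dual, generated by the
seminorms `f ↦ |f|(|x|)`. -/
def awStarTop (E : Type*) [NormedAddCommGroup E] [Lattice E] [HasSolidNorm E] [IsOrderedAddMonoid E] [NormedSpace ℝ E] :
    TopologicalSpace (E →L[ℝ] ℝ) :=
  ⨅ x : E, TopologicalSpace.induced (fun f => pabs f x) inferInstance

end Defs

section LatticeOrderedGroup

variable {G : Type*} [AddCommGroup G] [Lattice G] [IsOrderedAddMonoid G]

lemma nonneg_of_two_pow_nsmul_nonneg {z : G} (k : ℕ) (h : 0 ≤ 2 ^ k • z) : 0 ≤ z := by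
  induction k generalizing z with
  | zero => simpa using h
  | succ k ih => exact nsmul_two_semiclosed (ih (by rwa [← mul_nsmul, ← pow_succ']))

lemma posPart_le_posPart_sub_add {x w : G} (hw : 0 ≤ w) : x⁺ ≤ (x - w)⁺ + w :=
  sup_le (sub_le_iff_le_add.1 (le_posPart _)) (add_nonneg (posPart_nonneg _) hw)

lemma posPart_sub_le_self {x w : G} (hx : 0 ≤ x) (hw : 0 ≤ w) : (x - w)⁺ ≤ x :=
  sup_le (sub_le_self x hw) hx

lemma exists_add_of_abs_le_add {a b w : G} (ha : 0 ≤ a) (hb : 0 ≤ b) (hw : |w| ≤ a + b) :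
    ∃ w₁ w₂ : G, w = w₁ + w₂ ∧ |w₁| ≤ a ∧ |w₂| ≤ b := by
  obtain ⟨hw₁, hw₂⟩ := abs_le'.1 hw
  refine ⟨(w ⊓ a) ⊔ -a, w - ((w ⊓ a) ⊔ -a), by abel, ?_, ?_⟩
  · exact abs_le'.2 ⟨sup_le inf_le_right (neg_le_self ha), neg_le.2 le_sup_right⟩
  refine abs_le'.2 ⟨?_, ?_⟩
  · refine (sub_le_sub_left le_sup_left _).trans ?_
    rw [sub_inf]
    refine sup_le (by simpa using hb) ?_
    rw [sub_le_iff_le_add, add_comm]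
    exact hw₁
  · rw [neg_sub, sub_le_iff_le_add]
    refine sup_le (inf_le_left.trans (le_add_of_nonneg_left hb)) ?_
    calc -a = b + -(a + b) := by abel
      _ ≤ b + w := add_le_add_right (neg_le.1 hw₂) b

lemma DisjointSeq.mono {x y : ℕ → G} (hy : DisjointSeq y) (h : ∀ n, |x n| ≤ |y n|) :
    DisjointSeq x := fun m n hmn =>
  le_antisymm ((inf_le_inf (h m) (h n)).trans (hy m n hmn).le)
    (le_inf (abs_nonneg _) (abs_nonneg _))

end LatticeOrderedGroup

lemma smul_posPart {G : Type*} [AddCommGroup G] [Lattice G] [Module ℝ G] [PosSMulMono ℝ G]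
    {t : ℝ} (ht : 0 ≤ t) (x : G) : t • x⁺ = (t • x)⁺ := by
  rcases ht.eq_or_lt with rfl | ht
  · simp
  · have := (OrderIso.smulRight (β := G) ht).map_sup x 0
    simpa only [OrderIso.smulRight_apply, smul_zero, posPart_def] using this

section OrderedModule

variable {G : Type*} [AddCommGroup G] [Lattice G] [IsOrderedAddMonoid G] [Module ℝ G]

theorem PosSMulMono.of_orderClosedTopology [TopologicalSpace G] [ContinuousSMul ℝ G]
    [OrderClosedTopology G] : PosSMulMono ℝ G := by
  refine PosSMulMono.of_smul_nonneg fun c hc x hx => ?_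
  have hd : Tendsto (fun k : ℕ => (⌊c * 2 ^ k⌋₊ : ℝ) / 2 ^ k) atTop (𝓝 c) :=
    (tendsto_nat_floor_mul_div_atTop hc).comp (tendsto_pow_atTop_atTop_of_one_lt one_lt_two)
  refine ge_of_tendsto' (hd.smul_const x) fun k => nonneg_of_two_pow_nsmul_nonneg k ?_
  calc (0 : G) ≤ ⌊c * 2 ^ k⌋₊ • x := nsmul_nonneg hx _
  _ = 2 ^ k • (((⌊c * 2 ^ k⌋₊ : ℝ) / 2 ^ k) • x) := by
    rw [← Nat.cast_smul_eq_nsmul ℝ, ← Nat.cast_smul_eq_nsmul ℝ, smul_smul]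
    push_cast
    rw [mul_div_cancel₀ _ (by positivity)]

variable [PosSMulMono ℝ G]

lemma posPart_sub_smul_inf_posPart_sub_smul_eq_zero {a : G} (ha : 0 ≤ a) (b : G) {c d : ℝ}
    (hc : 0 < c) (hcd : 1 ≤ c * d) : (a - c • b)⁺ ⊓ (b - d • a)⁺ = 0 := by
  set r := (a - c • b)⁺ ⊓ (b - d • a)⁺
  have hr : 0 ≤ r := le_inf (posPart_nonneg _) (posPart_nonneg _)
  have he : 0 < min c 1 := lt_min hc one_pos
  have h₁ : min c 1 • r ≤ (a - c • b)⁺ :=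
    (smul_le_smul_of_nonneg_right (min_le_right c 1) hr).trans (by rw [one_smul]; exact inf_le_left)
  have h₂ : min c 1 • r ≤ (a - c • b)⁻ := calc
    min c 1 • r ≤ c • r := smul_le_smul_of_nonneg_right (min_le_left c 1) hr
    _ ≤ c • (b - d • a)⁺ := smul_le_smul_of_nonneg_left inf_le_right hc.le
    _ = (c • b - (c * d) • a)⁺ := by rw [smul_posPart hc.le, smul_sub, smul_smul]
    _ ≤ (c • b - a)⁺ := posPart_mono (sub_le_sub_left (le_smul_of_one_le_left ha hcd) _)
    _ = (a - c • b)⁻ := by rw [negPart_def, neg_sub, posPart_def]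
  have h₀ : min c 1 • r ≤ min c 1 • 0 := by
    simpa [posPart_inf_negPart_eq_zero] using le_inf h₁ h₂
  exact le_antisymm ((smul_le_smul_iff_of_pos_left he).1 h₀) hr

lemma disjointSeq_posPart_sub_sum {b : ℕ → G} (hb : ∀ n, 0 ≤ b n) {u : G}
    (hu : ∀ n, (2⁻¹ : ℝ) ^ n • b n ≤ u) :
    DisjointSeq fun n => (b n - (4 : ℝ) ^ n • ∑ i ∈ Finset.range n, b i - (2⁻¹ : ℝ) ^ n • u)⁺ := by
  set y := fun n => (b n - (4 : ℝ) ^ n • ∑ i ∈ Finset.range n, b i - (2⁻¹ : ℝ) ^ n • u)⁺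
  have hu₀ : 0 ≤ u := (hb 0).trans (by simpa using hu 0)
  have key : ∀ m n, m < n → y m ⊓ y n = 0 := by
    intro m n hmn
    have hm : b m - (4 : ℝ) ^ m • ∑ i ∈ Finset.range m, b i - (2⁻¹ : ℝ) ^ m • u
        ≤ b m - (2⁻¹ : ℝ) ^ (m + n) • b n := calc
      _ ≤ b m - (2⁻¹ : ℝ) ^ m • u :=
        sub_le_sub_right (sub_le_self _ (smul_nonneg (by positivity)
          (Finset.sum_nonneg fun i _ => hb i))) _
      _ ≤ b m - (2⁻¹ : ℝ) ^ (m + n) • b n := by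
        rw [pow_add, mul_smul]
        exact sub_le_sub_left (smul_le_smul_of_nonneg_left (hu n) (by positivity)) _
    have hn : b n - (4 : ℝ) ^ n • ∑ i ∈ Finset.range n, b i - (2⁻¹ : ℝ) ^ n • u
        ≤ b n - (4 : ℝ) ^ n • b m := calc
      _ ≤ b n - (4 : ℝ) ^ n • ∑ i ∈ Finset.range n, b i :=
        sub_le_self _ (smul_nonneg (by positivity) hu₀)
      _ ≤ b n - (4 : ℝ) ^ n • b m :=
        sub_le_sub_left (smul_le_smul_of_nonneg_left
          (Finset.single_le_sum (fun i _ => hb i) (Finset.mem_range.2 hmn)) (by positivity)) _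
    have hcd : 1 ≤ (2⁻¹ : ℝ) ^ (m + n) * 4 ^ n := by
      rw [show (4 : ℝ) ^ n = 2 ^ (n + n) by rw [pow_add, ← mul_pow]; norm_num, inv_pow,
        inv_mul_eq_div, one_le_div (by positivity)]
      exact pow_le_pow_right₀ one_le_two (by omega)
    refine le_antisymm ?_ (le_inf (posPart_nonneg _) (posPart_nonneg _))
    calc y m ⊓ y n ≤ (b m - (2⁻¹ : ℝ) ^ (m + n) • b n)⁺ ⊓ (b n - (4 : ℝ) ^ n • b m)⁺ :=
          inf_le_inf (posPart_mono hm) (posPart_mono hn)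
      _ = 0 := posPart_sub_smul_inf_posPart_sub_smul_eq_zero (hb m) _ (by positivity) hcd
  intro m n hmn
  rw [LatDisjoint, abs_of_nonneg (posPart_nonneg _), abs_of_nonneg (posPart_nonneg _)]
  rcases hmn.lt_or_gt with h | h
  · exact key m n h
  · rw [inf_comm]; exact key n m h

lemma exists_seq_forall_smul_sum (P : G → G → Prop) {c : ℕ → ℝ} (hc : ∀ n, 0 ≤ c n)
    (h : ∀ u, 0 ≤ u → ∃ x, P x u) :
    ∃ a : ℕ → G, ∀ n, P (a n) (c n • ∑ i ∈ Finset.range n, |a i|) := by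
  choose g hg using fun u : G => h |u| (abs_nonneg u)
  let S : ℕ → G := fun n => Nat.rec 0 (fun k s => s + |g (c k • s)|) n
  have hS : ∀ n, S n = ∑ i ∈ Finset.range n, |g (c i • S i)| := by
    intro n
    induction n with
    | zero => rfl
    | succ n ih => rw [Finset.sum_range_succ, ← ih]
  refine ⟨fun n => g (c n • S n), fun n => ?_⟩
  have hSn : 0 ≤ c n • S n :=
    smul_nonneg (hc n) (by rw [hS]; exact Finset.sum_nonneg fun i _ => abs_nonneg _)
  simpa only [← hS, abs_of_nonneg hSn] using hg (c n • S n)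

end OrderedModule

section AbsoluteSeminorm

variable {E : Type*} [NormedAddCommGroup E] [Lattice E] [NormedSpace ℝ E] (f : E →L[ℝ] ℝ)

lemma pabs_sub_comm (x y : E) : pabs f (x - y) = pabs f (y - x) := by
  rw [pabs, pabs, abs_sub_comm]

lemma nonempty_image_abs_le (x : E) : ((fun y => f y) '' {y : E | |y| ≤ |x|}).Nonempty :=
  ⟨f x, x, le_rfl, rfl⟩

lemma exists_lt_apply_of_lt_pabs {x : E} {r : ℝ} (h : r < pabs f x) :
    ∃ y, |y| ≤ |x| ∧ r < f y := by
  obtain ⟨_, ⟨y, hy, rfl⟩, hr⟩ := exists_lt_of_lt_csSup (nonempty_image_abs_le f x) h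
  exact ⟨y, hy, hr⟩

variable [HasSolidNorm E]

lemma apply_le_norm_mul_of_abs_le {x y : E} (h : |y| ≤ |x|) : f y ≤ ‖f‖ * ‖x‖ :=
  (le_abs_self _).trans ((f.le_opNorm y).trans (by gcongr; exact norm_le_norm_of_abs_le_abs h))

lemma le_pabs {x y : E} (h : |y| ≤ |x|) : f y ≤ pabs f x :=
  le_csSup ⟨‖f‖ * ‖x‖, by rintro _ ⟨z, hz, rfl⟩; exact apply_le_norm_mul_of_abs_le f hz⟩ ⟨y, h, rfl⟩

lemma pabs_le_norm_mul (x : E) : pabs f x ≤ ‖f‖ * ‖x‖ :=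
  csSup_le (nonempty_image_abs_le f x)
    (by rintro _ ⟨y, hy, rfl⟩; exact apply_le_norm_mul_of_abs_le f hy)

lemma pabs_mono {x y : E} (h : |x| ≤ |y|) : pabs f x ≤ pabs f y :=
  csSup_le (nonempty_image_abs_le f x) (by rintro _ ⟨z, hz, rfl⟩; exact le_pabs f (hz.trans h))

variable [IsOrderedAddMonoid E]

-- `HasSolidNorm` does not make real scalar multiplication monotone; the closed positive cone does.
instance : PosSMulMono ℝ E := .of_orderClosedTopology

lemma pabs_nonneg (x : E) : 0 ≤ pabs f x := by
  simpa using le_pabs f (show |(0 : E)| ≤ |x| by simp)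

lemma tendsto_pabs_of_tendsto_zero {ι : Type*} {l : Filter ι} {x : ι → E}
    (hx : Tendsto x l (𝓝 0)) : Tendsto (fun i => pabs f (x i)) l (𝓝 0) := by
  refine squeeze_zero (fun i => pabs_nonneg f _) (fun i => pabs_le_norm_mul f (x i)) ?_
  simpa using (tendsto_norm_zero.comp hx).const_mul ‖f‖

lemma pabs_mono_of_nonneg {x y : E} (hx : 0 ≤ x) (h : x ≤ y) : pabs f x ≤ pabs f y :=
  pabs_mono f (by rwa [abs_of_nonneg hx, abs_of_nonneg (hx.trans h)])

lemma pabs_add_le (x y : E) : pabs f (x + y) ≤ pabs f x + pabs f y := by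
  refine csSup_le (nonempty_image_abs_le f _) ?_
  rintro _ ⟨w, hw, rfl⟩
  obtain ⟨w₁, w₂, rfl, h₁, h₂⟩ :=
    exists_add_of_abs_le_add (abs_nonneg x) (abs_nonneg y) (hw.trans (abs_add_le x y))
  show f (w₁ + w₂) ≤ _
  rw [map_add]
  exact add_le_add (le_pabs f h₁) (le_pabs f h₂)

end AbsoluteSeminorm

section DisjointlyWeaklyCompact

variable {E : Type*} [NormedAddCommGroup E] [Lattice E] [HasSolidNorm E] [IsOrderedAddMonoid E]
  [NormedSpace ℝ E] {A : Set E}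

theorem DisjointlyWeaklyCompact.tendsto_pabs (hA : DisjointlyWeaklyCompact A) (f : E →L[ℝ] ℝ)
    {y : ℕ → E} (hyA : ∀ n, y n ∈ SolidHull A) (hy : DisjointSeq y) :
    Tendsto (fun n => pabs f (y n)) atTop (𝓝 0) := by
  choose z hzy hz using fun n : ℕ => exists_lt_apply_of_lt_pabs f
    (sub_lt_self (pabs f (y n)) (Nat.one_div_pos_of_nat (α := ℝ) (n := n)))
  have hzA : ∀ n, z n ∈ SolidHull A := fun n =>
    let ⟨x, hx, hyx⟩ := hyA n
    ⟨x, hx, (hzy n).trans hyx⟩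
  have hz₀ : Tendsto (fun n => f (z n)) atTop (𝓝 0) := hA.2 z hzA (hy.mono hzy) f
  refine tendsto_of_tendsto_of_tendsto_of_le_of_le tendsto_const_nhds
    (by simpa using hz₀.add tendsto_one_div_add_atTop_nhds_zero_nat) (fun n => pabs_nonneg f _)
    fun n => ?_
  linarith [hz n, one_div ((n : ℝ) + 1)]

theorem DisjointlyWeaklyCompact.exists_pabs_posPart_abs_sub_lt [CompleteSpace E]
    (hA : DisjointlyWeaklyCompact A) (f : E →L[ℝ] ℝ) {ε : ℝ} (hε : 0 < ε) :
    ∃ u, 0 ≤ u ∧ ∀ x ∈ A, pabs f (|x| - u)⁺ < ε := by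
  by_contra! hcon
  obtain ⟨a, ha⟩ := exists_seq_forall_smul_sum (fun x u => x ∈ A ∧ ε ≤ pabs f (|x| - u)⁺)
    (c := fun n => (4 : ℝ) ^ n) (fun n => by positivity) hcon
  obtain ⟨M, hM⟩ := isBounded_iff_forall_norm_le.1 hA.1
  have hsum : Summable fun n => (2⁻¹ : ℝ) ^ n • |a n| := by
    refine Summable.of_norm_bounded ((summable_geometric_of_lt_one (r := (2⁻¹ : ℝ))
      (by norm_num) (by norm_num)).mul_right M) fun n => ?_
    rw [norm_smul, norm_abs_eq_norm, norm_pow, norm_inv, Real.norm_two]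
    exact mul_le_mul_of_nonneg_left (hM _ (ha n).1) (by positivity)
  set u := ∑' n, (2⁻¹ : ℝ) ^ n • |a n|
  have hu : ∀ n, (2⁻¹ : ℝ) ^ n • |a n| ≤ u := fun n =>
    hsum.le_tsum n fun k _ => smul_nonneg (by positivity) (abs_nonneg _)
  have hu₀ : 0 ≤ u := tsum_nonneg fun k => smul_nonneg (by positivity) (abs_nonneg _)
  set y := fun n => (|a n| - (4 : ℝ) ^ n • ∑ i ∈ Finset.range n, |a i| - (2⁻¹ : ℝ) ^ n • u)⁺
  have hyA : ∀ n, y n ∈ SolidHull A := fun n => ⟨a n, (ha n).1, by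
    rw [abs_of_nonneg (posPart_nonneg _), sub_sub]
    exact posPart_sub_le_self (abs_nonneg _)
      (add_nonneg (smul_nonneg (by positivity) (Finset.sum_nonneg fun i _ => abs_nonneg _))
        (smul_nonneg (by positivity) hu₀))⟩
  have hy : Tendsto (fun n => pabs f (y n)) atTop (𝓝 0) :=
    hA.tendsto_pabs f hyA (disjointSeq_posPart_sub_sum (fun n => abs_nonneg _) hu)
  have htail : Tendsto (fun n => pabs f ((2⁻¹ : ℝ) ^ n • u)) atTop (𝓝 0) :=
    tendsto_pabs_of_tendsto_zero f (by
      simpa using (tendsto_pow_atTop_nhds_zero_of_lt_one (by norm_num : (0 : ℝ) ≤ 2⁻¹)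
        (by norm_num)).smul_const u)
  have hlow : ∀ n, ε ≤ pabs f (y n) + pabs f ((2⁻¹ : ℝ) ^ n • u) := fun n => calc
    ε ≤ pabs f (|a n| - (4 : ℝ) ^ n • ∑ i ∈ Finset.range n, |a i|)⁺ := (ha n).2
    _ ≤ pabs f (y n + (2⁻¹ : ℝ) ^ n • u) :=
      pabs_mono_of_nonneg f (posPart_nonneg _)
        (posPart_le_posPart_sub_add (smul_nonneg (by positivity) hu₀))
    _ ≤ _ := pabs_add_le f _ _
  have := ge_of_tendsto' (by simpa using hy.add htail) hlow
  linarith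

theorem DisjointlyWeaklyCompact.exists_forall_pabs_posPart_abs_sub_lt [CompleteSpace E]
    (hA : DisjointlyWeaklyCompact A) (s : Finset (E →L[ℝ] ℝ)) {ε : ℝ} (hε : 0 < ε) :
    ∃ u, 0 ≤ u ∧ ∀ x ∈ A, ∀ f ∈ s, pabs f (|x| - u)⁺ < ε := by
  choose U hU₀ hU using fun f => hA.exists_pabs_posPart_abs_sub_lt f hε
  refine ⟨∑ f ∈ s, U f, Finset.sum_nonneg fun f _ => hU₀ f, fun x hx f hf => ?_⟩
  refine (pabs_mono_of_nonneg f (posPart_nonneg _) (posPart_mono ?_)).trans_lt (hU f x hx)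
  exact sub_le_sub_left (Finset.single_le_sum (fun g _ => hU₀ g) hf) _

end DisjointlyWeaklyCompact

theorem AWTotallyBounded.of_forall_exists_finset {E : Type*} [NormedAddCommGroup E] [Lattice E]
    [HasSolidNorm E] [IsOrderedAddMonoid E] [NormedSpace ℝ E] {A : Set E}
    (h : ∀ ε > 0, ∀ s : Finset (E →L[ℝ] ℝ), ∃ Φ : Finset E,
      ∀ x ∈ A, ∃ y ∈ Φ, ∀ f ∈ s, pabs f (x - y) < ε) :
    AWTotallyBounded A := by
  classical
  intro ε hε s
  obtain ⟨Φ, hΦ⟩ := h (ε / 2) (half_pos hε) s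
  set near : E → E → Prop := fun x y => ∀ f ∈ s, pabs f (x - y) < ε / 2
  choose! ψ hψA hψ using fun y (hy : y ∈ Φ.filter fun y => ∃ x ∈ A, near x y) =>
    (Finset.mem_filter.1 hy).2
  refine ⟨(Φ.filter fun y => ∃ x ∈ A, near x y).image ψ, ?_, fun x hx => ?_⟩
  · intro _ hx
    obtain ⟨y, hy, rfl⟩ := Finset.mem_image.1 (Finset.mem_coe.1 hx)
    exact hψA y hy
  obtain ⟨y, hy, hxy⟩ := hΦ x hx
  have hy' : y ∈ Φ.filter fun y => ∃ x ∈ A, near x y := Finset.mem_filter.2 ⟨hy, x, hx, hxy⟩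
  refine ⟨ψ y, Finset.mem_image_of_mem ψ hy', fun f hf => ?_⟩
  calc pabs f (x - ψ y) ≤ pabs f (x - y) + pabs f (ψ y - y) := by
        rw [pabs_sub_comm f (ψ y)]
        simpa using pabs_add_le f (x - y) (y - ψ y)
    _ < ε / 2 + ε / 2 := add_lt_add (hxy f hf) (hψ y hy' f hf)
    _ = ε := add_halves ε

theorem stmt14 {E : Type*} [NormedAddCommGroup E] [Lattice E] [HasSolidNorm E] [IsOrderedAddMonoid E] [NormedSpace ℝ E] [CompleteSpace E]
    (h : ∀ x : E, 0 ≤ x → AWTotallyBounded (Set.Icc (-x) x)) :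
    ∀ A : Set E, DisjointlyWeaklyCompact A → AWTotallyBounded A := by
  intro A hA
  refine AWTotallyBounded.of_forall_exists_finset fun ε hε s => ?_
  obtain ⟨u, hu₀, hu⟩ := hA.exists_forall_pabs_posPart_abs_sub_lt s (half_pos hε)
  obtain ⟨Φ, -, hΦ⟩ := h u hu₀ (ε / 2) (half_pos hε) s
  refine ⟨Φ, fun x hx => ?_⟩
  obtain ⟨x₁, x₂, rfl, hx₁, hx₂⟩ := exists_add_of_abs_le_add hu₀ (posPart_nonneg (|x| - u))
    (sub_le_iff_le_add'.1 (le_posPart _))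
  obtain ⟨y, hy, hx₁y⟩ := hΦ x₁ ⟨neg_le.1 (abs_le'.1 hx₁).2, (abs_le'.1 hx₁).1⟩
  refine ⟨y, hy, fun f hf => ?_⟩
  calc pabs f (x₁ + x₂ - y) ≤ pabs f (x₁ - y) + pabs f x₂ := by
        rw [add_sub_right_comm]; exact pabs_add_le f _ _
    _ < ε / 2 + ε / 2 := add_lt_add (hx₁y f hf)
        ((pabs_mono f (by rwa [abs_of_nonneg (posPart_nonneg _)])).trans_lt (hu _ hx f hf))
    _ = ε := add_halves ε
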